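/- arXiv:1009.1496 — 9 statements merged into one kernel-verified Lean document; each statement's English description precedes it below -/
import Mathlib

section
/- For any sequence (ψ_k) in a Hilbert space H, dom(S) ⊆ dom(C), where S is the frame operator and C the analysis operator. -/
open Filter Topology
open scoped ComplexInnerProductSpace

/-! Pairing the `n`-th partial sum of `∑ ⟨f, ψ k⟩ ψ k` with `f` gives exactly the `n`-th partial
sum of `∑ |⟨f, ψ k⟩|²`. If the first series converges to `s`, these nonnegative partial sums
therefore converge to `Re ⟨s, f⟩`, so the coefficients are square-summable. -/

section

variable {𝕜 H : Type*} [RCLike 𝕜] [NormedAddCommGroup H] [InnerProductSpace 𝕜 H]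

theorem inner_sum_inner_smul_eq_sum_norm_sq {ι : Type*} (s : Finset ι) (ψ : ι → H) (f : H) :
    inner 𝕜 (∑ k ∈ s, inner 𝕜 (ψ k) f • ψ k) f = ((∑ k ∈ s, ‖inner 𝕜 (ψ k) f‖ ^ 2 : ℝ) : 𝕜) := by
  simp only [sum_inner, inner_smul_left, RCLike.conj_mul, RCLike.ofReal_sum, RCLike.ofReal_pow]

theorem hasSum_norm_inner_sq_of_tendsto (ψ : ℕ → H) (f s : H)
    (hs : Tendsto (fun n => ∑ k ∈ Finset.range n, inner 𝕜 (ψ k) f • ψ k) atTop (𝓝 s)) :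
    HasSum (fun k => ‖inner 𝕜 (ψ k) f‖ ^ 2) (RCLike.re (inner 𝕜 s f)) := by
  refine (hasSum_iff_tendsto_nat_of_nonneg (fun k => by positivity) _).2 ?_
  have h := (RCLike.continuous_re (K := 𝕜)).tendsto _ |>.comp
    (hs.inner (tendsto_const_nhds (x := f)))
  simpa only [Function.comp_def, inner_sum_inner_smul_eq_sum_norm_sq, RCLike.ofReal_re] using h

end

theorem stmt1_general {H : Type*} [NormedAddCommGroup H] [InnerProductSpace ℂ H]
    (ψ : ℕ → H) (f : H)
    (hf : ∃ s : H, Tendsto (fun n => ∑ k ∈ Finset.range n, ⟪ψ k, f⟫ • ψ k) atTop (𝓝 s)) :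
    Memℓp (fun k => ⟪ψ k, f⟫) 2 := by
  obtain ⟨s, hs⟩ := hf
  refine memℓp_gen ?_
  simpa only [ENNReal.toReal_ofNat, Real.rpow_two] using
    (hasSum_norm_inner_sq_of_tendsto ψ f s hs).summable

/-- For any sequence `(ψ k)` in a Hilbert space `H`, `dom S ⊆ dom C`: if the series
`∑ ⟨f, ψ k⟩ ψ k` converges in `H`, then the sequence `(⟨f, ψ k⟩)` belongs to `ℓ²`. -/
theorem stmt1 {H : Type*} [NormedAddCommGroup H] [InnerProductSpace ℂ H] [CompleteSpace H]
    (ψ : ℕ → H) (f : H)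
    (hf : ∃ s : H, Tendsto (fun n => ∑ k ∈ Finset.range n, ⟪ψ k, f⟫ • ψ k) atTop (𝓝 s)) :
    Memℓp (fun k => ⟪ψ k, f⟫) 2 :=
  stmt1_general ψ f hf
end

section
/- For any sequence (ψ_k) in a Hilbert space H, dom(S) = dom(C) if and only if ran(C) ⊆ dom(D), where D is the synthesis operator. -/
/-!
If the partial sums `∑_{k<n} ⟪ψ k, f⟫ ψ k` converge to `s`, then pairing them with `f` shows
that the partial sums of `∑ |⟪ψ k, f⟫|²` converge to `re ⟪f, s⟫`; so `dom S ⊆ dom C` always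
holds, and `dom S = dom C` says exactly that `D` converges on `ran C`.
-/

open Filter Topology
open scoped ComplexInnerProductSpace

theorem memℓp_two_iff_summable_sq_norm {α : Type*} {E : α → Type*} [∀ i, NormedAddCommGroup (E i)]
    (c : ∀ i, E i) :
    Memℓp c 2 ↔ Summable fun k => ‖c k‖ ^ 2 := by
  rw [memℓp_gen_iff (by norm_num)]
  simp only [ENNReal.toReal_ofNat]
  exact_mod_cast Iff.rfl

section FrameSums

variable {𝕜 H ι : Type*} [RCLike 𝕜] [NormedAddCommGroup H] [InnerProductSpace 𝕜 H]

theorem inner_sum_inner_smul_self (ψ : ι → H) (f : H) (s : Finset ι) :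
    inner 𝕜 f (∑ k ∈ s, inner 𝕜 (ψ k) f • ψ k) = ((∑ k ∈ s, ‖inner 𝕜 (ψ k) f‖ ^ 2 : ℝ) : 𝕜) := by
  rw [inner_sum]
  push_cast
  refine Finset.sum_congr rfl fun k _ => ?_
  rw [inner_smul_right, ← inner_conj_symm f (ψ k), RCLike.mul_conj, norm_inner_symm]

theorem hasSum_sq_norm_inner_of_tendsto (ψ : ℕ → H) {f s : H}
    (hs : Tendsto (fun n => ∑ k ∈ Finset.range n, inner 𝕜 (ψ k) f • ψ k) atTop (𝓝 s)) :
    HasSum (fun k => ‖inner 𝕜 (ψ k) f‖ ^ 2) (RCLike.re (inner 𝕜 f s)) := by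
  rw [hasSum_iff_tendsto_nat_of_nonneg (fun _ => sq_nonneg _)]
  have hpair : Tendsto (fun n => inner 𝕜 f (∑ k ∈ Finset.range n, inner 𝕜 (ψ k) f • ψ k))
      atTop (𝓝 (inner 𝕜 f s)) := tendsto_const_nhds.inner hs
  refine ((RCLike.continuous_re.tendsto _).comp hpair).congr fun n => ?_
  simp only [Function.comp_apply, inner_sum_inner_smul_self, RCLike.ofReal_re]

theorem memℓp_inner_of_tendsto_sum_inner_smul (ψ : ℕ → H) {f s : H}
    (hs : Tendsto (fun n => ∑ k ∈ Finset.range n, inner 𝕜 (ψ k) f • ψ k) atTop (𝓝 s)) :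
    Memℓp (fun k => inner 𝕜 (ψ k) f) 2 :=
  (memℓp_two_iff_summable_sq_norm _).2 (hasSum_sq_norm_inner_of_tendsto ψ hs).summable

end FrameSums

theorem stmt2_general {H : Type*} [NormedAddCommGroup H] [InnerProductSpace ℂ H]
    (ψ : ℕ → H) :
    ({f : H | ∃ s : H,
        Tendsto (fun n => ∑ k ∈ Finset.range n, ⟪ψ k, f⟫ • ψ k) atTop (𝓝 s)}
      = {f : H | Memℓp (fun k => ⟪ψ k, f⟫) 2})
    ↔ (∀ f : H, Memℓp (fun k => ⟪ψ k, f⟫) 2 →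
        ∃ s : H, Tendsto (fun n => ∑ k ∈ Finset.range n, ⟪ψ k, f⟫ • ψ k) atTop (𝓝 s)) := by
  constructor
  · intro hdom f hf
    exact hdom.symm.subset hf
  · intro hran
    refine Set.Subset.antisymm ?_ hran
    rintro f ⟨s, hs⟩
    exact memℓp_inner_of_tendsto_sum_inner_smul ψ hs

/-- For any sequence `(ψ k)` in a Hilbert space `H`, `dom S = dom C` if and only if
`ran C ⊆ dom D`. -/
theorem stmt2 {H : Type*} [NormedAddCommGroup H] [InnerProductSpace ℂ H] [CompleteSpace H]
    (ψ : ℕ → H) :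
    ({f : H | ∃ s : H,
        Tendsto (fun n => ∑ k ∈ Finset.range n, ⟪ψ k, f⟫ • ψ k) atTop (𝓝 s)}
      = {f : H | Memℓp (fun k => ⟪ψ k, f⟫) 2})
    ↔ (∀ f : H, Memℓp (fun k => ⟪ψ k, f⟫) 2 →
        ∃ s : H, Tendsto (fun n => ∑ k ∈ Finset.range n, ⟪ψ k, f⟫ • ψ k) atTop (𝓝 s)) :=
  stmt2_general ψ
end

section
/- For any sequence (ψ_k) in a Hilbert space H, dom(D) ⊆ dom(G) if and only if ran(D) ⊆ dom(C), where G is the Gram operator. -/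
open Filter Topology
open scoped ComplexInnerProductSpace

lemma aux_tendsto {H : Type*} [NormedAddCommGroup H] [InnerProductSpace ℂ H]
    (ψ : ℕ → H) (c : ℕ → ℂ) (s : H)
    (hts : Tendsto (fun n => ∑ k ∈ Finset.range n, c k • ψ k) atTop (𝓝 s)) (k : ℕ) :
    Tendsto (fun n => ∑ l ∈ Finset.range n, ⟪ψ k, ψ l⟫ * c l) atTop (𝓝 ⟪ψ k, s⟫) := by
  have h := Tendsto.inner (𝕜 := ℂ) (tendsto_const_nhds (x := ψ k) (f := atTop)) hts
  convert h using 1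
  funext n
  rw [inner_sum]
  refine Finset.sum_congr rfl fun l _ => ?_
  rw [inner_smul_right, mul_comm]

/-- For any sequence `(ψ k)` in a Hilbert space `H`, `dom D ⊆ dom G` if and only if
`ran D ⊆ dom C`, where `G` is the Gram operator with matrix `G_{k,l} = ⟨ψ l, ψ k⟩`
(written here as `⟪ψ k, ψ l⟫` in Mathlib's convention, linear in the second entry). -/
theorem stmt3 {H : Type*} [NormedAddCommGroup H] [InnerProductSpace ℂ H] [CompleteSpace H]
    (ψ : ℕ → H) :
    (∀ c : lp (fun _ : ℕ => ℂ) 2,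
      (∃ s : H, Tendsto (fun n => ∑ k ∈ Finset.range n, (c : ℕ → ℂ) k • ψ k) atTop (𝓝 s)) →
      ∃ g : ℕ → ℂ,
        (∀ k : ℕ, Tendsto (fun n => ∑ l ∈ Finset.range n, ⟪ψ k, ψ l⟫ * (c : ℕ → ℂ) l)
          atTop (𝓝 (g k))) ∧ Memℓp g 2)
    ↔
    (∀ (c : lp (fun _ : ℕ => ℂ) 2) (s : H),
      Tendsto (fun n => ∑ k ∈ Finset.range n, (c : ℕ → ℂ) k • ψ k) atTop (𝓝 s) →
      Memℓp (fun k => ⟪ψ k, s⟫) 2) := by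
  constructor
  · intro h c s hts
    obtain ⟨g, hg, hmem⟩ := h c ⟨s, hts⟩
    have : g = fun k => ⟪ψ k, s⟫ := by
      funext k
      exact tendsto_nhds_unique (hg k) (aux_tendsto ψ _ s hts k)
    rwa [this] at hmem
  · intro h c hs
    obtain ⟨s, hts⟩ := hs
    exact ⟨fun k => ⟪ψ k, s⟫, aux_tendsto ψ _ s hts, h c s hts⟩
end

section
/- If ∑_l |⟨ψ_l,ψ_k⟩|² < ∞ for every k, then the analysis operator C of (ψ_k) is densely defined. -/
open scoped ComplexInnerProductSpace

/-!
The domain of the analysis operator is a subspace `D`. The hypothesis says exactly that every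
`ψ j` lies in `D`, and every vector orthogonal to all the `ψ k` lies in `D` (its coefficient
sequence vanishes). So a vector orthogonal to `D` is in particular orthogonal to itself, hence
`Dᗮ = ⊥`, and in a Hilbert space this means `D` is dense.
-/

section AnalysisDomain

variable {𝕜 E ι : Type*} [RCLike 𝕜] [NormedAddCommGroup E] [InnerProductSpace 𝕜 E]

variable (𝕜) in
def analysisDomain (ψ : ι → E) (p : ENNReal) : Submodule 𝕜 E where
  carrier := {f | Memℓp (fun k => inner 𝕜 (ψ k) f) p}
  add_mem' {f g} hf hg := by
    simp only [Set.mem_ofPred_eq, inner_add_right] at hf hg ⊢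
    exact hf.add hg
  zero_mem' := by
    simp only [Set.mem_ofPred_eq, inner_zero_right]
    exact zero_memℓp
  smul_mem' c f hf := by
    simp only [Set.mem_ofPred_eq, inner_smul_right] at hf ⊢
    exact hf.const_smul c

variable {ψ : ι → E} {p : ENNReal} {f : E}

theorem mem_analysisDomain : f ∈ analysisDomain 𝕜 ψ p ↔ Memℓp (fun k => inner 𝕜 (ψ k) f) p :=
  Iff.rfl

theorem mem_analysisDomain_of_forall_inner_eq_zero (hf : ∀ k, inner 𝕜 (ψ k) f = 0) :
    f ∈ analysisDomain 𝕜 ψ p := by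
  rw [mem_analysisDomain, funext hf]
  exact zero_memℓp

theorem self_mem_analysisDomain_iff {j : ι} :
    ψ j ∈ analysisDomain 𝕜 ψ p ↔ Memℓp (fun k => inner 𝕜 (ψ j) (ψ k)) p := by
  rw [mem_analysisDomain, ← Memℓp.star_iff]
  simp only [Pi.star_def, RCLike.star_def, inner_conj_symm]

theorem analysisDomain_orthogonal_eq_bot (hψ : ∀ j, ψ j ∈ analysisDomain 𝕜 ψ p) :
    (analysisDomain 𝕜 ψ p)ᗮ = (⊥ : Submodule 𝕜 E) := by
  refine (Submodule.eq_bot_iff _).mpr fun f hf => ?_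
  have hf_mem : f ∈ analysisDomain 𝕜 ψ p :=
    mem_analysisDomain_of_forall_inner_eq_zero fun k => hf (ψ k) (hψ k)
  exact inner_self_eq_zero.mp (hf f hf_mem)

theorem dense_analysisDomain [CompleteSpace E] (hψ : ∀ j, ψ j ∈ analysisDomain 𝕜 ψ p) :
    Dense (analysisDomain 𝕜 ψ p : Set E) :=
  Submodule.dense_iff_topologicalClosure_eq_top.mpr <|
    Submodule.topologicalClosure_eq_top_iff.mpr (analysisDomain_orthogonal_eq_bot hψ)

end AnalysisDomain

/-- If `∑_l |⟨ψ l, ψ k⟩|² < ∞` for every `k`, then the analysis operator `C` of `(ψ k)`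
is densely defined, i.e. `dom C = {f : (⟨f, ψ k⟩)_k ∈ ℓ²}` is dense in `H`. -/
theorem stmt4 {H : Type*} [NormedAddCommGroup H] [InnerProductSpace ℂ H] [CompleteSpace H]
    (ψ : ℕ → H) (h : ∀ k : ℕ, Memℓp (fun l => ⟪ψ k, ψ l⟫) 2) :
    Dense {f : H | Memℓp (fun k => ⟪ψ k, f⟫) 2} :=
  dense_analysisDomain fun j => self_mem_analysisDomain_iff.mpr (h j)
end

section
/- If ∑_k ∑_l |⟨ψ_l,ψ_k⟩|² < ∞, then dom(D) = ℓ² and (ψ_k) is a Bessel sequence for H. -/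
/-!
Expanding `‖∑ c k • ψ k‖²` and applying Cauchy–Schwarz to the Gram double sum gives
`‖∑_{k ∈ s} c k • ψ k‖² ≤ √B₀ · ∑_{k ∈ s} |c k|²` with `B₀ = ∑_k ∑_l |⟪ψ l, ψ k⟫|²`, uniformly in
the finite set `s`: the Gram matrix is Hilbert–Schmidt, hence bounded. This upper bound makes the
partial sums of `∑ c k • ψ k` Cauchy for every `c ∈ ℓ²`, and testing it against
`g = ∑_{k ∈ s} ⟪ψ k, f⟫ • ψ k`, for which `⟪g, f⟫ = ∑_{k ∈ s} |⟪ψ k, f⟫|²`, gives the Bessel bound.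
-/

open Filter Topology
open scoped ComplexInnerProductSpace

theorem Finset.sum_sum_le_tsum_tsum {ι κ : Type*} {a : ι → κ → ℝ} (ha : ∀ i j, 0 ≤ a i j)
    (h₁ : ∀ i, Summable (a i)) (h₂ : Summable fun i => ∑' j, a i j) (s : Finset ι)
    (t : Finset κ) : ∑ i ∈ s, ∑ j ∈ t, a i j ≤ ∑' i, ∑' j, a i j :=
  calc ∑ i ∈ s, ∑ j ∈ t, a i j
      ≤ ∑ i ∈ s, ∑' j, a i j :=
        Finset.sum_le_sum fun i _ => (h₁ i).sum_le_tsum t fun j _ => ha i j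
    _ ≤ ∑' i, ∑' j, a i j := h₂.sum_le_tsum s fun i _ => tsum_nonneg (ha i)

section
variable {𝕜 ι : Type*} [RCLike 𝕜] {E : Type*} [NormedAddCommGroup E] [InnerProductSpace 𝕜 E]

theorem norm_sum_smul_sq_le_sqrt_sum_norm_inner_sq (s : Finset ι) (c : ι → 𝕜) (ψ : ι → E) :
    ‖∑ k ∈ s, c k • ψ k‖ ^ 2 ≤
      √(∑ k ∈ s, ∑ l ∈ s, ‖inner 𝕜 (ψ k) (ψ l)‖ ^ 2) * ∑ k ∈ s, ‖c k‖ ^ 2 := by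
  have hS : 0 ≤ ∑ k ∈ s, ‖c k‖ ^ 2 := by positivity
  have hcc : ∑ p ∈ s ×ˢ s, (‖c p.1‖ * ‖c p.2‖) ^ 2 = (∑ k ∈ s, ‖c k‖ ^ 2) ^ 2 := by
    simp_rw [Finset.sum_product, mul_pow, sq (∑ k ∈ s, _), Finset.sum_mul_sum]
  calc ‖∑ k ∈ s, c k • ψ k‖ ^ 2
      = RCLike.re (inner 𝕜 (∑ k ∈ s, c k • ψ k) (∑ k ∈ s, c k • ψ k)) :=
        (inner_self_eq_norm_sq _).symm
    _ ≤ ‖inner 𝕜 (∑ k ∈ s, c k • ψ k) (∑ k ∈ s, c k • ψ k)‖ := RCLike.re_le_norm _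
    _ = ‖∑ k ∈ s, ∑ l ∈ s, c l * (starRingEnd 𝕜 (c k) * inner 𝕜 (ψ k) (ψ l))‖ := by
        rw [sum_inner]
        simp only [inner_sum, inner_smul_left, inner_smul_right]
    _ ≤ ∑ p ∈ s ×ˢ s, (‖c p.1‖ * ‖c p.2‖) * ‖inner 𝕜 (ψ p.1) (ψ p.2)‖ := by
        rw [Finset.sum_product]
        refine (norm_sum_le _ _).trans (Finset.sum_le_sum fun k _ => (norm_sum_le _ _).trans ?_)
        simp only [norm_mul, RCLike.norm_conj, mul_assoc, mul_left_comm, le_refl]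
    _ ≤ √(∑ p ∈ s ×ˢ s, (‖c p.1‖ * ‖c p.2‖) ^ 2) *
          √(∑ p ∈ s ×ˢ s, ‖inner 𝕜 (ψ p.1) (ψ p.2)‖ ^ 2) :=
        Real.sum_mul_le_sqrt_mul_sqrt _ _ _
    _ = _ := by
        rw [hcc, Real.sqrt_sq hS, Finset.sum_product, mul_comm]

variable {B : ℝ} {ψ : ι → E}

theorem summable_smul_of_forall_norm_sum_smul_sq_le [CompleteSpace E] (hB : 0 ≤ B)
    (hψ : ∀ (s : Finset ι) (c : ι → 𝕜), ‖∑ k ∈ s, c k • ψ k‖ ^ 2 ≤ B * ∑ k ∈ s, ‖c k‖ ^ 2)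
    {c : ι → 𝕜} (hc : Summable fun k => ‖c k‖ ^ 2) : Summable fun k => c k • ψ k := by
  rw [summable_iff_vanishing_norm]
  intro ε hε
  obtain ⟨s, hs⟩ := summable_iff_vanishing_norm.1 hc (ε ^ 2 / (B + 1)) (by positivity)
  refine ⟨s, fun t ht => lt_of_pow_lt_pow_left₀ 2 hε.le ?_⟩
  have htail : ∑ k ∈ t, ‖c k‖ ^ 2 < ε ^ 2 / (B + 1) := (le_abs_self _).trans_lt (hs t ht)
  calc ‖∑ k ∈ t, c k • ψ k‖ ^ 2
      ≤ B * ∑ k ∈ t, ‖c k‖ ^ 2 := hψ t c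
    _ ≤ (B + 1) * ∑ k ∈ t, ‖c k‖ ^ 2 := by gcongr; linarith
    _ < (B + 1) * (ε ^ 2 / (B + 1)) := by gcongr
    _ = ε ^ 2 := by field_simp

theorem sum_norm_inner_sq_le_of_forall_norm_sum_smul_sq_le (hB : 0 ≤ B)
    (hψ : ∀ (s : Finset ι) (c : ι → 𝕜), ‖∑ k ∈ s, c k • ψ k‖ ^ 2 ≤ B * ∑ k ∈ s, ‖c k‖ ^ 2)
    (f : E) (s : Finset ι) : ∑ k ∈ s, ‖inner 𝕜 (ψ k) f‖ ^ 2 ≤ B * ‖f‖ ^ 2 := by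
  set S := ∑ k ∈ s, ‖inner 𝕜 (ψ k) f‖ ^ 2
  set g := ∑ k ∈ s, inner 𝕜 (ψ k) f • ψ k
  have hgf : inner 𝕜 g f = (S : 𝕜) := by
    simp only [g, S, sum_inner, inner_smul_left, RCLike.conj_mul]
    push_cast
    rfl
  have hSg : S ≤ ‖g‖ * ‖f‖ :=
    calc S ≤ ‖(S : 𝕜)‖ := by rw [RCLike.norm_ofReal]; exact le_abs_self S
      _ = ‖inner 𝕜 g f‖ := by rw [hgf]
      _ ≤ ‖g‖ * ‖f‖ := norm_inner_le_norm g f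
  have hg : ‖g‖ ^ 2 ≤ B * S := hψ s _
  have hS : 0 ≤ S := by positivity
  have hSS : S * S ≤ B * ‖f‖ ^ 2 * S :=
    calc S * S ≤ (‖g‖ * ‖f‖) ^ 2 := by rw [← sq]; gcongr
      _ = ‖g‖ ^ 2 * ‖f‖ ^ 2 := mul_pow _ _ _
      _ ≤ B * S * ‖f‖ ^ 2 := by gcongr
      _ = B * ‖f‖ ^ 2 * S := by ring
  rcases hS.eq_or_lt with hS0 | hSpos
  · rw [← hS0]; positivity
  · exact le_of_mul_le_mul_right hSS hSpos

end

/-- If `∑_k ∑_l |⟨ψ l, ψ k⟩|² < ∞`, then `dom D = ℓ²` (i.e. `∑ c k • ψ k` converges for every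
`(c k) ∈ ℓ²`) and `(ψ k)` is a Bessel sequence for `H`. -/
theorem stmt5 {H : Type*} [NormedAddCommGroup H] [InnerProductSpace ℂ H] [CompleteSpace H]
    (ψ : ℕ → H)
    (h₁ : ∀ k : ℕ, Summable fun l => ‖⟪ψ k, ψ l⟫‖ ^ 2)
    (h₂ : Summable fun k => ∑' l, ‖⟪ψ k, ψ l⟫‖ ^ 2) :
    (∀ c : lp (fun _ : ℕ => ℂ) 2,
      ∃ s : H, Tendsto (fun n => ∑ k ∈ Finset.range n, (c : ℕ → ℂ) k • ψ k) atTop (𝓝 s))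
    ∧ (∃ B : ℝ, 0 < B ∧ ∀ f : H,
        (Summable fun k => ‖⟪ψ k, f⟫‖ ^ 2) ∧ ∑' k, ‖⟪ψ k, f⟫‖ ^ 2 ≤ B * ‖f‖ ^ 2) := by
  set B₀ := ∑' k, ∑' l, ‖⟪ψ k, ψ l⟫‖ ^ 2
  have hψ (s : Finset ℕ) (c : ℕ → ℂ) :
      ‖∑ k ∈ s, c k • ψ k‖ ^ 2 ≤ √B₀ * ∑ k ∈ s, ‖c k‖ ^ 2 :=
    (norm_sum_smul_sq_le_sqrt_sum_norm_inner_sq s c ψ).trans <| by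
      gcongr
      exact Finset.sum_sum_le_tsum_tsum (fun _ _ => sq_nonneg _) h₁ h₂ s s
  refine ⟨fun c => ?_, √B₀ + 1, by positivity, fun f => ?_⟩
  · have hc : Summable fun k => ‖(c : ℕ → ℂ) k‖ ^ 2 := by
      simpa using (lp.memℓp c).summable (by norm_num)
    exact ⟨_, (summable_smul_of_forall_norm_sum_smul_sq_le (Real.sqrt_nonneg _) hψ
      hc).hasSum.tendsto_sum_nat⟩
  · have hfin (s : Finset ℕ) : ∑ k ∈ s, ‖⟪ψ k, f⟫‖ ^ 2 ≤ (√B₀ + 1) * ‖f‖ ^ 2 :=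
      (sum_norm_inner_sq_le_of_forall_norm_sum_smul_sq_le (Real.sqrt_nonneg _) hψ f s).trans
        (by gcongr; linarith)
    exact ⟨summable_of_sum_le (fun _ => sq_nonneg _) hfin,
      Real.tsum_le_of_sum_le (fun _ => sq_nonneg _) hfin⟩
end

section
/- For any sequence (ψ_k) in a Hilbert space H, the adjoint of the synthesis operator D equals the analysis operator C, i.e., D* = C (with equality of domains). -/
open Filter Topology
open scoped ComplexInnerProductSpace

/-!
Testing the adjoint identity `⟪D c, f⟫ = ⟪c, g⟫` against the unit vectors `c = e_k`, for which
`D e_k = ψ k`, forces `g k = ⟪ψ k, f⟫`, so `g = C f` and `f ∈ dom C`. Conversely, if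
`C f ∈ ℓ²`, then `⟪∑_{k<n} c k ψ k, f⟫` are the partial sums of `⟪c, C f⟫`, and continuity of the
inner product carries the identity to the limit `D c`.
-/

section Synthesis

variable {𝕜 E : Type*} [RCLike 𝕜] [NormedAddCommGroup E] [InnerProductSpace 𝕜 E]

theorem tendsto_sum_range_lp_single_smul (p : ENNReal) (ψ : ℕ → E) (k : ℕ) (a : 𝕜) :
    Tendsto (fun n => ∑ j ∈ Finset.range n, (lp.single p k a : ℕ → 𝕜) j • ψ j) atTop
      (𝓝 (a • ψ k)) := by
  refine tendsto_atTop_of_eventually_const (i₀ := k + 1) fun n hn => ?_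
  rw [Finset.sum_eq_single_of_mem k (Finset.mem_range.mpr hn), lp.single_apply_self]
  intro j _ hj
  simp [hj]

theorem apply_eq_inner_of_forall_tendsto_synthesis (ψ : ℕ → E) (f : E)
    (g : lp (fun _ : ℕ => 𝕜) 2)
    (hg : ∀ (c : lp (fun _ : ℕ => 𝕜) 2) (s : E),
      Tendsto (fun n => ∑ k ∈ Finset.range n, (c : ℕ → 𝕜) k • ψ k) atTop (𝓝 s) →
      inner 𝕜 s f = inner 𝕜 c g)
    (k : ℕ) : (g : ℕ → 𝕜) k = inner 𝕜 (ψ k) f := by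
  have hk := hg (lp.single 2 k 1) (ψ k) (by
    simpa using tendsto_sum_range_lp_single_smul 2 ψ k (1 : 𝕜))
  rw [lp.inner_single_left] at hk
  simpa using hk.symm

theorem inner_synthesis_eq_inner_analysis (ψ : ℕ → E) (f : E)
    (hf : Memℓp (fun k => inner 𝕜 (ψ k) f) 2) (c : lp (fun _ : ℕ => 𝕜) 2) (s : E)
    (hs : Tendsto (fun n => ∑ k ∈ Finset.range n, (c : ℕ → 𝕜) k • ψ k) atTop (𝓝 s)) :
    inner 𝕜 s f = inner 𝕜 c (⟨_, hf⟩ : lp (fun _ : ℕ => 𝕜) 2) := by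
  have h_partial : ∀ n, inner 𝕜 (∑ k ∈ Finset.range n, (c : ℕ → 𝕜) k • ψ k) f
      = ∑ k ∈ Finset.range n, inner 𝕜 ((c : ℕ → 𝕜) k) (inner 𝕜 (ψ k) f) := fun n => by
    simp only [sum_inner, inner_smul_left, RCLike.inner_apply, mul_comm]
  have h_lim := (hs.inner (tendsto_const_nhds (x := f))).congr h_partial
  exact tendsto_nhds_unique h_lim (lp.hasSum_inner c ⟨_, hf⟩).tendsto_sum_nat

end Synthesis

theorem stmt6_general {H : Type*} [NormedAddCommGroup H] [InnerProductSpace ℂ H]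
    (ψ : ℕ → H) (f : H) :
    ((∃ g : lp (fun _ : ℕ => ℂ) 2,
        ∀ (c : lp (fun _ : ℕ => ℂ) 2) (s : H),
          Tendsto (fun n => ∑ k ∈ Finset.range n, (c : ℕ → ℂ) k • ψ k) atTop (𝓝 s) →
          ⟪s, f⟫ = ⟪c, g⟫)
      ↔ Memℓp (fun k => ⟪ψ k, f⟫) 2)
    ∧ (∀ g : lp (fun _ : ℕ => ℂ) 2,
        (∀ (c : lp (fun _ : ℕ => ℂ) 2) (s : H),
          Tendsto (fun n => ∑ k ∈ Finset.range n, (c : ℕ → ℂ) k • ψ k) atTop (𝓝 s) →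
          ⟪s, f⟫ = ⟪c, g⟫) →
        ∀ k : ℕ, (g : ℕ → ℂ) k = ⟪ψ k, f⟫) := by
  refine ⟨⟨fun ⟨g, hg⟩ => ?_, fun hf => ⟨⟨_, hf⟩, inner_synthesis_eq_inner_analysis ψ f hf⟩⟩,
    apply_eq_inner_of_forall_tendsto_synthesis ψ f⟩
  have hg_eq : ⇑g = fun k => ⟪ψ k, f⟫ :=
    funext (apply_eq_inner_of_forall_tendsto_synthesis ψ f g hg)
  exact hg_eq ▸ lp.memℓp g

/-- For any sequence `(ψ k)` in a Hilbert space `H`, the adjoint of the synthesis operator `D`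
equals the analysis operator `C` (with equality of domains): a vector `f ∈ H` belongs to
`dom D*` (i.e. there is `g ∈ ℓ²` with `⟨D c, f⟩ = ⟨c, g⟩` for all `c ∈ dom D`) if and only if
`f ∈ dom C` (i.e. `(⟨f, ψ k⟩)_k ∈ ℓ²`), and in that case `D* f = C f`. -/
theorem stmt6 {H : Type*} [NormedAddCommGroup H] [InnerProductSpace ℂ H] [CompleteSpace H]
    (ψ : ℕ → H) (f : H) :
    ((∃ g : lp (fun _ : ℕ => ℂ) 2,
        ∀ (c : lp (fun _ : ℕ => ℂ) 2) (s : H),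
          Tendsto (fun n => ∑ k ∈ Finset.range n, (c : ℕ → ℂ) k • ψ k) atTop (𝓝 s) →
          ⟪s, f⟫ = ⟪c, g⟫)
      ↔ Memℓp (fun k => ⟪ψ k, f⟫) 2)
    ∧ (∀ g : lp (fun _ : ℕ => ℂ) 2,
        (∀ (c : lp (fun _ : ℕ => ℂ) 2) (s : H),
          Tendsto (fun n => ∑ k ∈ Finset.range n, (c : ℕ → ℂ) k • ψ k) atTop (𝓝 s) →
          ⟪s, f⟫ = ⟪c, g⟫) →
        ∀ k : ℕ, (g : ℕ → ℂ) k = ⟪ψ k, f⟫) :=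
  stmt6_general ψ f
end

section
/- If ∑_l |⟨ψ_l,ψ_k⟩|² < ∞ for every k, then the Gram operator G of (ψ_k) is a closed operator on ℓ². -/
open Filter Topology
open scoped ComplexInnerProductSpace

/-!
Each row `r_k = (⟪ψ k, ψ l⟫)_l` lies in `ℓ²`, so for every `x ∈ ℓ²` the `k`-th row sum
`∑_l ⟪ψ k, ψ l⟫ x_l` converges, to `⟪conj r_k, x⟫`. Hence the graph of `G` is the intersection
over `k` of the sets `{(x, y) | ⟪conj r_k, x⟫ = y_k}`, each closed since both sides are
continuous in `(x, y)`.
-/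

section RowSums

variable {𝕜 : Type*} [RCLike 𝕜]

noncomputable def Memℓp.conjVec {ι : Type*} {a : ι → 𝕜} (ha : Memℓp a 2) :
    lp (fun _ : ι => 𝕜) 2 :=
  ⟨fun i => star (a i), ha.star_mem⟩

theorem Memℓp.hasSum_mul {ι : Type*} {a : ι → 𝕜} (ha : Memℓp a 2) (x : lp (fun _ : ι => 𝕜) 2) :
    HasSum (fun l => a l * (x : ι → 𝕜) l) (inner 𝕜 ha.conjVec x) := by
  convert lp.hasSum_inner ha.conjVec x using 2 with l
  rw [RCLike.inner_apply, mul_comm]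
  exact congrArg _ (star_star (a l)).symm

theorem isClosed_setOf_tendsto_rowSums {a : ℕ → ℕ → 𝕜} (ha : ∀ k, Memℓp (a k) 2) :
    IsClosed {p : lp (fun _ : ℕ => 𝕜) 2 × lp (fun _ : ℕ => 𝕜) 2 |
      ∀ k, Tendsto (fun n => ∑ l ∈ Finset.range n, a k l * (p.1 : ℕ → 𝕜) l) atTop
        (𝓝 ((p.2 : ℕ → 𝕜) k))} := by
  have graph_eq : {p : lp (fun _ : ℕ => 𝕜) 2 × lp (fun _ : ℕ => 𝕜) 2 |
      ∀ k, Tendsto (fun n => ∑ l ∈ Finset.range n, a k l * (p.1 : ℕ → 𝕜) l) atTop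
        (𝓝 ((p.2 : ℕ → 𝕜) k))} =
      ⋂ k, {p | inner 𝕜 (ha k).conjVec p.1 = (p.2 : ℕ → 𝕜) k} := by
    ext p
    simp only [Set.mem_ofPred_eq, Set.mem_iInter]
    refine forall_congr' fun k => ?_
    have row_sums := ((ha k).hasSum_mul p.1).tendsto_sum_nat
    exact ⟨tendsto_nhds_unique row_sums, fun h => h ▸ row_sums⟩
  rw [graph_eq]
  refine isClosed_iInter fun k => isClosed_eq ?_ ?_
  · exact (innerSL 𝕜 (ha k).conjVec).continuous.comp continuous_fst
  · exact (continuous_apply k).comp (lp.uniformContinuous_coe.continuous.comp continuous_snd)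

end RowSums

theorem stmt11_general {H : Type*} [NormedAddCommGroup H] [InnerProductSpace ℂ H]
    (ψ : ℕ → H) (h : ∀ k : ℕ, Memℓp (fun l => ⟪ψ k, ψ l⟫) 2) :
    IsClosed {p : lp (fun _ : ℕ => ℂ) 2 × lp (fun _ : ℕ => ℂ) 2 |
      ∀ k : ℕ, Tendsto (fun n => ∑ l ∈ Finset.range n, ⟪ψ k, ψ l⟫ * (p.1 : ℕ → ℂ) l)
        atTop (𝓝 ((p.2 : ℕ → ℂ) k))} :=
  isClosed_setOf_tendsto_rowSums h

/-- If `∑_l |⟨ψ l, ψ k⟩|² < ∞` for every `k`, then the Gram operator `G` of `(ψ k)` is a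
closed operator on `ℓ²`, i.e. its graph is a closed subset of `ℓ² × ℓ²`. -/
theorem stmt11 {H : Type*} [NormedAddCommGroup H] [InnerProductSpace ℂ H] [CompleteSpace H]
    (ψ : ℕ → H) (h : ∀ k : ℕ, Memℓp (fun l => ⟪ψ k, ψ l⟫) 2) :
    IsClosed {p : lp (fun _ : ℕ => ℂ) 2 × lp (fun _ : ℕ => ℂ) 2 |
      ∀ k : ℕ, Tendsto (fun n => ∑ l ∈ Finset.range n, ⟪ψ k, ψ l⟫ * (p.1 : ℕ → ℂ) l)
        atTop (𝓝 ((p.2 : ℕ → ℂ) k))} :=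
  stmt11_general ψ h
end

section
/- A sequence (ψ_k) in a Hilbert space H is a Bessel sequence for H if and only if its frame operator S has domain equal to all of H, i.e., ∑ ⟨f,ψ_k⟩ψ_k converges for every f ∈ H. -/
open Filter Topology
open scoped ComplexInnerProductSpace

/-!
If `∑ₖ ‖⟪ψ k, f⟫‖² ≤ B ‖f‖²`, then Cauchy–Schwarz applied to `⟪g, g⟫` for
`g = ∑_{k ∈ s} c k • ψ k` gives `‖g‖² ≤ B ∑_{k ∈ s} ‖c k‖²`, so for `c k = ⟪ψ k, f⟫` the series
`∑ₖ c k • ψ k` is Cauchy. Conversely, if it converges for every `f`, the partial frame operators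
`Sₙ f = ∑_{k < n} ⟪ψ k, f⟫ • ψ k` are pointwise bounded, hence uniformly bounded by
Banach–Steinhaus, and `∑_{k < n} ‖⟪ψ k, f⟫‖² = ⟪f, Sₙ f⟫ ≤ ‖Sₙ‖ ‖f‖²`.
-/

open Finset RCLike InnerProductSpace ComplexConjugate

section Bessel

variable {𝕜 ι H : Type*} [RCLike 𝕜] [NormedAddCommGroup H] [InnerProductSpace 𝕜 H]

theorem norm_sum_smul_sq_le_of_bessel {ψ : ι → H} {B : ℝ} (hB0 : 0 ≤ B) {s : Finset ι}
    (hB : ∀ f, ∑ k ∈ s, ‖⟪ψ k, f⟫_𝕜‖ ^ 2 ≤ B * ‖f‖ ^ 2) (c : ι → 𝕜) :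
    ‖∑ k ∈ s, c k • ψ k‖ ^ 2 ≤ B * ∑ k ∈ s, ‖c k‖ ^ 2 := by
  set g := ∑ k ∈ s, c k • ψ k
  rcases (norm_nonneg g).eq_or_lt with hg | hg
  · rw [← hg]
    simpa using mul_nonneg hB0 (sum_nonneg fun k _ => by positivity)
  have hself : ‖g‖ ^ 2 ≤ ∑ k ∈ s, ‖c k‖ * ‖⟪ψ k, g⟫_𝕜‖ := calc
    ‖g‖ ^ 2 = re ⟪g, g⟫_𝕜 := norm_sq_eq_re_inner g
    _ = re (∑ k ∈ s, conj (c k) * ⟪ψ k, g⟫_𝕜) := by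
        simp only [g, sum_inner, inner_smul_left]
    _ ≤ ‖∑ k ∈ s, conj (c k) * ⟪ψ k, g⟫_𝕜‖ := re_le_norm _
    _ ≤ ∑ k ∈ s, ‖conj (c k) * ⟪ψ k, g⟫_𝕜‖ := norm_sum_le _ _
    _ = ∑ k ∈ s, ‖c k‖ * ‖⟪ψ k, g⟫_𝕜‖ := by simp only [norm_mul, norm_conj]
  have hsq : ‖g‖ ^ 2 * ‖g‖ ^ 2 ≤ (B * ∑ k ∈ s, ‖c k‖ ^ 2) * ‖g‖ ^ 2 := calc
    ‖g‖ ^ 2 * ‖g‖ ^ 2 ≤ (∑ k ∈ s, ‖c k‖ * ‖⟪ψ k, g⟫_𝕜‖) ^ 2 := by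
        rw [← sq]; exact pow_le_pow_left₀ (by positivity) hself 2
    _ ≤ (∑ k ∈ s, ‖c k‖ ^ 2) * ∑ k ∈ s, ‖⟪ψ k, g⟫_𝕜‖ ^ 2 := sum_mul_sq_le_sq_mul_sq _ _ _
    _ ≤ (∑ k ∈ s, ‖c k‖ ^ 2) * (B * ‖g‖ ^ 2) := by gcongr; exact hB g
    _ = (B * ∑ k ∈ s, ‖c k‖ ^ 2) * ‖g‖ ^ 2 := by ring
  exact le_of_mul_le_mul_right hsq (by positivity)

theorem summable_smul_of_bessel [CompleteSpace H] {ψ : ι → H} {B : ℝ} (hB0 : 0 < B)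
    (hB : ∀ s : Finset ι, ∀ f, ∑ k ∈ s, ‖⟪ψ k, f⟫_𝕜‖ ^ 2 ≤ B * ‖f‖ ^ 2) {c : ι → 𝕜}
    (hc : Summable fun k => ‖c k‖ ^ 2) : Summable fun k => c k • ψ k := by
  refine summable_iff_vanishing_norm.2 fun ε hε => ?_
  obtain ⟨s, hs⟩ := summable_iff_vanishing_norm.1 hc (ε ^ 2 / B) (by positivity)
  refine ⟨s, fun t ht => ?_⟩
  have htail : ∑ k ∈ t, ‖c k‖ ^ 2 < ε ^ 2 / B :=
    (le_abs_self _).trans_lt (by simpa only [Real.norm_eq_abs] using hs t ht)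
  have hsq : ‖∑ k ∈ t, c k • ψ k‖ ^ 2 < ε ^ 2 := calc
    ‖∑ k ∈ t, c k • ψ k‖ ^ 2 ≤ B * ∑ k ∈ t, ‖c k‖ ^ 2 :=
        norm_sum_smul_sq_le_of_bessel hB0.le (hB t) c
    _ < B * (ε ^ 2 / B) := by gcongr
    _ = ε ^ 2 := by field_simp
  exact lt_of_pow_lt_pow_left₀ 2 hε.le hsq

variable (𝕜) in
noncomputable def finiteFrameOperator (ψ : ι → H) (s : Finset ι) : H →L[𝕜] H :=
  ∑ k ∈ s, (innerSL 𝕜 (ψ k)).smulRight (ψ k)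

theorem finiteFrameOperator_apply (ψ : ι → H) (s : Finset ι) (f : H) :
    finiteFrameOperator 𝕜 ψ s f = ∑ k ∈ s, ⟪ψ k, f⟫_𝕜 • ψ k := by
  simp [finiteFrameOperator]

theorem inner_finiteFrameOperator_self (ψ : ι → H) (s : Finset ι) (f : H) :
    ⟪f, finiteFrameOperator 𝕜 ψ s f⟫_𝕜 = ((∑ k ∈ s, ‖⟪ψ k, f⟫_𝕜‖ ^ 2 : ℝ) : 𝕜) := by
  rw [finiteFrameOperator_apply, inner_sum, ofReal_sum]
  refine sum_congr rfl fun k _ => ?_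
  rw [inner_smul_right, ← inner_conj_symm (ψ k) f, mul_comm, mul_conj, ofReal_pow, norm_conj]

theorem sum_norm_inner_sq_le_opNorm_mul (ψ : ι → H) (s : Finset ι) (f : H) :
    ∑ k ∈ s, ‖⟪ψ k, f⟫_𝕜‖ ^ 2 ≤ ‖finiteFrameOperator 𝕜 ψ s‖ * ‖f‖ ^ 2 := calc
  ∑ k ∈ s, ‖⟪ψ k, f⟫_𝕜‖ ^ 2 = re ⟪f, finiteFrameOperator 𝕜 ψ s f⟫_𝕜 := by
      rw [inner_finiteFrameOperator_self, ofReal_re]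
  _ ≤ ‖⟪f, finiteFrameOperator 𝕜 ψ s f⟫_𝕜‖ := re_le_norm _
  _ ≤ ‖f‖ * ‖finiteFrameOperator 𝕜 ψ s f‖ := norm_inner_le_norm _ _
  _ ≤ ‖f‖ * (‖finiteFrameOperator 𝕜 ψ s‖ * ‖f‖) := by
      gcongr; exact (finiteFrameOperator 𝕜 ψ s).le_opNorm f
  _ = ‖finiteFrameOperator 𝕜 ψ s‖ * ‖f‖ ^ 2 := by ring

theorem exists_bessel_bound_of_tendsto [CompleteSpace H] {ψ : ℕ → H}
    (h : ∀ f, ∃ s, Tendsto (fun n => ∑ k ∈ range n, ⟪ψ k, f⟫_𝕜 • ψ k) atTop (𝓝 s)) :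
    ∃ C, ∀ n f, ∑ k ∈ range n, ‖⟪ψ k, f⟫_𝕜‖ ^ 2 ≤ C * ‖f‖ ^ 2 := by
  have hbdd : ∀ f, ∃ C, ∀ n, ‖finiteFrameOperator 𝕜 ψ (range n) f‖ ≤ C := fun f => by
    obtain ⟨s, hs⟩ := h f
    obtain ⟨C, hC⟩ := hs.norm.bddAbove_range
    exact ⟨C, fun n => by simpa only [finiteFrameOperator_apply] using hC (Set.mem_range_self n)⟩
  obtain ⟨C, hC⟩ := banach_steinhaus hbdd
  exact ⟨C, fun n f => (sum_norm_inner_sq_le_opNorm_mul ψ _ f).trans (by gcongr; exact hC n)⟩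

end Bessel

/-- A sequence `(ψ k)` is a Bessel sequence for `H` if and only if its frame operator `S` has
domain all of `H`, i.e. `∑ ⟨f, ψ k⟩ ψ k` converges for every `f ∈ H`. -/
theorem stmt15 {H : Type*} [NormedAddCommGroup H] [InnerProductSpace ℂ H] [CompleteSpace H]
    (ψ : ℕ → H) :
    (∃ B : ℝ, 0 < B ∧ ∀ f : H,
      (Summable fun k => ‖⟪ψ k, f⟫‖ ^ 2) ∧ ∑' k, ‖⟪ψ k, f⟫‖ ^ 2 ≤ B * ‖f‖ ^ 2)
    ↔ ∀ f : H,
        ∃ s : H, Tendsto (fun n => ∑ k ∈ Finset.range n, ⟪ψ k, f⟫ • ψ k) atTop (𝓝 s) := by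
  constructor
  · rintro ⟨B, hB0, hB⟩ f
    have hfinite : ∀ (s : Finset ℕ) g, ∑ k ∈ s, ‖⟪ψ k, g⟫‖ ^ 2 ≤ B * ‖g‖ ^ 2 := fun s g =>
      ((hB g).1.sum_le_tsum s fun k _ => by positivity).trans (hB g).2
    exact ⟨_, (summable_smul_of_bessel hB0 hfinite (hB f).1).hasSum.tendsto_sum_nat⟩
  · intro h
    obtain ⟨C, hC⟩ := exists_bessel_bound_of_tendsto h
    have hbound : ∀ f n, ∑ k ∈ range n, ‖⟪ψ k, f⟫‖ ^ 2 ≤ max C 1 * ‖f‖ ^ 2 := fun f n =>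
      (hC n f).trans (by gcongr; exact le_max_left C 1)
    refine ⟨max C 1, by positivity, fun f => ⟨?_, ?_⟩⟩
    · exact summable_of_sum_range_le (fun _ => by positivity) (hbound f)
    · exact Real.tsum_le_of_sum_range_le (fun _ => by positivity) (hbound f)
end

section
/- A sequence (ψ_k) is a Bessel sequence for H if and only if the domain of its Gram operator G equals all of ℓ², in which case G is automatically bounded. -/
/-!
If `(ψ k)` is Bessel, its analysis operator `A f = (⟪ψ k, f⟫)ₖ` is bounded and `A A†` is the Gram
operator: its `k`-th entry `⟪ψ k, A† c⟫ = ⟪A ψ k, c⟫` is the sum of the Gram series. Conversely,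
if `G` is defined on all of `ℓ²`, the columns of the Gram matrix (the images of the unit vectors)
lie in `ℓ²`; by Hermitian symmetry so do its rows, so each entry of `G c` is a continuous
functional of `c`, and the closed graph theorem makes `G` bounded. Testing
`⟪c, G c⟫ = ‖∑ cₗ ψₗ‖²` on finitely supported `c` bounds the synthesis operator by `‖G‖`, and the
choice `cₗ = ⟪ψₗ, f⟫` turns this into the Bessel inequality with `B = ‖G‖`.
-/

open Filter Topology
open scoped ComplexInnerProductSpace ComplexConjugate InnerProduct lp ENNReal

namespace lp

section ClosedGraph

variable {ι 𝕜 F : Type*} [NontriviallyNormedField 𝕜] {E : ι → Type*}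
  [∀ i, NormedAddCommGroup (E i)] [∀ i, NormedSpace 𝕜 (E i)] [∀ i, CompleteSpace (E i)]
  {p : ℝ≥0∞} [Fact (1 ≤ p)] [NormedAddCommGroup F] [NormedSpace 𝕜 F] [CompleteSpace F]

theorem continuous_of_continuous_apply (T : F →ₗ[𝕜] lp E p)
    (hT : ∀ i, Continuous fun x => T x i) : Continuous T :=
  T.continuous_of_seq_closed_graph fun _ x y hu hTu => lp.ext <| funext fun i =>
    tendsto_nhds_unique (((evalCLM 𝕜 E p i).continuous.tendsto y).comp hTu)
      (((hT i).tendsto x).comp hu)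

end ClosedGraph

theorem memℓp_two_of_summable_sq {ι : Type*} {E : ι → Type*} [∀ i, NormedAddCommGroup (E i)]
    {f : ∀ i, E i} (hf : Summable fun i => ‖f i‖ ^ 2) : Memℓp f 2 :=
  memℓp_gen (by simpa using hf)

theorem hasSum_mul_single {ι 𝕜 : Type*} [NormedRing 𝕜] [DecidableEq ι] (p : ℝ≥0∞)
    (v : ι → 𝕜) (i : ι) (x : 𝕜) :
    HasSum (fun j => v j * lp.single (E := fun _ => 𝕜) p i x j) (v i * x) := by
  simpa using hasSum_single (f := fun j => v j * lp.single (E := fun _ => 𝕜) p i x j) i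
    fun j hj => by simp [Pi.single_eq_of_ne hj]

end lp

def IsMatrixOperator (M : ℕ → ℕ → ℂ) (T : ℓ²(ℕ, ℂ) →L[ℂ] ℓ²(ℕ, ℂ)) : Prop :=
  ∀ (c : ℓ²(ℕ, ℂ)) (k : ℕ), HasSum (fun l => M k l * c l) (T c k)

theorem IsMatrixOperator.apply_single {M : ℕ → ℕ → ℂ} {T : ℓ²(ℕ, ℂ) →L[ℂ] ℓ²(ℕ, ℂ)}
    (hT : IsMatrixOperator M T) (l : ℕ) (x : ℂ) (k : ℕ) :
    T (lp.single 2 l x) k = M k l * x :=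
  (hT _ k).unique (lp.hasSum_mul_single 2 (M k) l x)

theorem exists_isMatrixOperator {M : ℕ → ℕ → ℂ} (hM : ∀ k l, M l k = conj (M k l))
    (hdom : ∀ c : ℓ²(ℕ, ℂ), ∃ g : ℓ²(ℕ, ℂ), ∀ k,
      Tendsto (fun n => ∑ l ∈ Finset.range n, M k l * c l) atTop (𝓝 (g k))) :
    ∃ T, IsMatrixOperator M T := by
  have hcol : ∀ l, Memℓp (fun k => M k l) 2 := by
    intro l
    obtain ⟨g, hg⟩ := hdom (lp.single 2 l 1)
    have : ⇑g = fun k => M k l := funext fun k => tendsto_nhds_unique (hg k)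
      (by simpa using (lp.hasSum_mul_single 2 (M k) l 1).tendsto_sum_nat)
    exact this ▸ g.2
  let row (k : ℕ) : ℓ²(ℕ, ℂ) := ⟨fun l => M l k, hcol k⟩
  have hrow : ∀ c k, HasSum (fun l => M k l * c l) ⟪row k, c⟫ := by
    intro c k
    simpa [row, hM k, mul_comm] using lp.hasSum_inner (𝕜 := ℂ) (row k) c
  have hmem : ∀ c, Memℓp (fun k => ⟪row k, c⟫) 2 := by
    intro c
    obtain ⟨g, hg⟩ := hdom c
    have : ⇑g = fun k => ⟪row k, c⟫ :=
      funext fun k => tendsto_nhds_unique (hg k) (hrow c k).tendsto_sum_nat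
    exact this ▸ g.2
  let T : ℓ²(ℕ, ℂ) →ₗ[ℂ] ℓ²(ℕ, ℂ) :=
    { toFun c := ⟨_, hmem c⟩
      map_add' _ _ := lp.ext <| funext fun _ => inner_add_right _ _ _
      map_smul' _ _ := lp.ext <| funext fun _ => inner_smul_right _ _ _ }
  exact ⟨⟨T, lp.continuous_of_continuous_apply T fun _ => continuous_const.inner continuous_id⟩,
    hrow⟩

section Gram

variable {H : Type*} [NormedAddCommGroup H] [InnerProductSpace ℂ H]

theorem sum_norm_inner_sq_le_of_norm_sum_smul_sq_le {ι : Type*} {ψ : ι → H} {C : ℝ}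
    (hC : 0 ≤ C)
    (h : ∀ (s : Finset ι) (a : ι → ℂ), ‖∑ l ∈ s, a l • ψ l‖ ^ 2 ≤ C * ∑ l ∈ s, ‖a l‖ ^ 2)
    (f : H) (s : Finset ι) :
    ∑ k ∈ s, ‖⟪ψ k, f⟫‖ ^ 2 ≤ C * ‖f‖ ^ 2 := by
  set t := ∑ k ∈ s, ‖⟪ψ k, f⟫‖ ^ 2
  set S := ∑ k ∈ s, ⟪ψ k, f⟫ • ψ k
  have hSf : ⟪S, f⟫ = t := by
    simp only [S, t, sum_inner, inner_smul_left, Complex.conj_mul', Complex.ofReal_sum,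
      Complex.ofReal_pow]
  have ht : 0 ≤ t := by positivity
  have htS : t ≤ ‖S‖ * ‖f‖ := by
    simpa [hSf, abs_of_nonneg ht] using norm_inner_le_norm (𝕜 := ℂ) S f
  have hS : ‖S‖ ^ 2 ≤ C * t := h s _
  rcases ht.eq_or_lt with ht0 | ht0
  · rw [← ht0]
    positivity
  · refine le_of_mul_le_mul_left ?_ ht0
    nlinarith [mul_le_mul htS htS ht (by positivity)]

variable {ψ : ℕ → H}

theorem IsMatrixOperator.norm_sum_smul_sq_le {T : ℓ²(ℕ, ℂ) →L[ℂ] ℓ²(ℕ, ℂ)}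
    (hT : IsMatrixOperator (fun k l => ⟪ψ k, ψ l⟫) T) (s : Finset ℕ) (a : ℕ → ℂ) :
    ‖∑ l ∈ s, a l • ψ l‖ ^ 2 ≤ ‖T‖ * ∑ l ∈ s, ‖a l‖ ^ 2 := by
  set c : ℓ²(ℕ, ℂ) := ∑ l ∈ s, lp.single 2 l (a l)
  have hc : ‖c‖ ^ 2 = ∑ l ∈ s, ‖a l‖ ^ 2 := by
    simpa using lp.norm_sum_single (p := 2) (by norm_num) a s
  have hcTc : ⟪c, T c⟫ = ⟪∑ l ∈ s, a l • ψ l, ∑ l ∈ s, a l • ψ l⟫ := by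
    simp only [c, map_sum, sum_inner, inner_sum, lp.inner_single_left, hT.apply_single,
      inner_smul_left, inner_smul_right, Finset.mul_sum, RCLike.inner_apply']
    exact Finset.sum_congr rfl fun _ _ => Finset.sum_congr rfl fun _ _ => by ring
  calc ‖∑ l ∈ s, a l • ψ l‖ ^ 2 = RCLike.re ⟪c, T c⟫ := by
        rw [hcTc, inner_self_eq_norm_sq]
    _ ≤ ‖c‖ * ‖T c‖ := (RCLike.re_le_norm _).trans (norm_inner_le_norm _ _)
    _ ≤ ‖c‖ * (‖T‖ * ‖c‖) := by gcongr; exact T.le_opNorm c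
    _ = ‖T‖ * ∑ l ∈ s, ‖a l‖ ^ 2 := by rw [← hc]; ring

theorem IsMatrixOperator.summable_and_tsum_le {T : ℓ²(ℕ, ℂ) →L[ℂ] ℓ²(ℕ, ℂ)}
    (hT : IsMatrixOperator (fun k l => ⟪ψ k, ψ l⟫) T) (f : H) :
    (Summable fun k => ‖⟪ψ k, f⟫‖ ^ 2) ∧ ∑' k, ‖⟪ψ k, f⟫‖ ^ 2 ≤ ‖T‖ * ‖f‖ ^ 2 := by
  have hfin := sum_norm_inner_sq_le_of_norm_sum_smul_sq_le (norm_nonneg T)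
    hT.norm_sum_smul_sq_le f
  have hsum := summable_of_sum_le (fun _ => sq_nonneg _) hfin
  exact ⟨hsum, hsum.tsum_le_of_sum_le hfin⟩

variable [CompleteSpace H]

noncomputable def analysisOperator (ψ : ℕ → H) (hψ : ∀ f, Memℓp (fun k => ⟪ψ k, f⟫) 2) :
    H →L[ℂ] ℓ²(ℕ, ℂ) :=
  let A : H →ₗ[ℂ] ℓ²(ℕ, ℂ) :=
    { toFun f := ⟨_, hψ f⟩
      map_add' _ _ := lp.ext <| funext fun _ => inner_add_right _ _ _
      map_smul' _ _ := lp.ext <| funext fun _ => inner_smul_right _ _ _ }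
  ⟨A, lp.continuous_of_continuous_apply A fun _ => continuous_const.inner continuous_id⟩

theorem analysisOperator_apply (hψ : ∀ f, Memℓp (fun k => ⟪ψ k, f⟫) 2) (f : H) (k : ℕ) :
    analysisOperator ψ hψ f k = ⟪ψ k, f⟫ :=
  rfl

theorem isMatrixOperator_analysisOperator_comp_adjoint
    (hψ : ∀ f, Memℓp (fun k => ⟪ψ k, f⟫) 2) :
    IsMatrixOperator (fun k l => ⟪ψ k, ψ l⟫)
      (analysisOperator ψ hψ ∘L (analysisOperator ψ hψ)†) := by
  intro c k
  rw [ContinuousLinearMap.comp_apply, analysisOperator_apply,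
    ContinuousLinearMap.adjoint_inner_right]
  simpa [analysisOperator_apply, mul_comm] using
    lp.hasSum_inner (𝕜 := ℂ) (analysisOperator ψ hψ (ψ k)) c

end Gram

/-- A sequence `(ψ k)` is a Bessel sequence for `H` if and only if the domain of its Gram
operator `G` equals all of `ℓ²`; in that case `G` is automatically bounded. -/
theorem stmt16 {H : Type*} [NormedAddCommGroup H] [InnerProductSpace ℂ H] [CompleteSpace H]
    (ψ : ℕ → H) :
    ((∃ B : ℝ, 0 < B ∧ ∀ f : H,
        (Summable fun k => ‖⟪ψ k, f⟫‖ ^ 2) ∧ ∑' k, ‖⟪ψ k, f⟫‖ ^ 2 ≤ B * ‖f‖ ^ 2)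
      ↔ ∀ c : lp (fun _ : ℕ => ℂ) 2, ∃ g : lp (fun _ : ℕ => ℂ) 2,
          ∀ k : ℕ, Tendsto (fun n => ∑ l ∈ Finset.range n, ⟪ψ k, ψ l⟫ * (c : ℕ → ℂ) l)
            atTop (𝓝 ((g : ℕ → ℂ) k)))
    ∧ ((∀ c : lp (fun _ : ℕ => ℂ) 2, ∃ g : lp (fun _ : ℕ => ℂ) 2,
          ∀ k : ℕ, Tendsto (fun n => ∑ l ∈ Finset.range n, ⟪ψ k, ψ l⟫ * (c : ℕ → ℂ) l)
            atTop (𝓝 ((g : ℕ → ℂ) k))) →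
        ∃ M : ℝ, ∀ (c g : lp (fun _ : ℕ => ℂ) 2),
          (∀ k : ℕ, Tendsto (fun n => ∑ l ∈ Finset.range n, ⟪ψ k, ψ l⟫ * (c : ℕ → ℂ) l)
            atTop (𝓝 ((g : ℕ → ℂ) k))) → ‖g‖ ≤ M * ‖c‖) := by
  have gram_hermitian : ∀ k l, ⟪ψ l, ψ k⟫ = conj ⟪ψ k, ψ l⟫ := fun k l =>
    (inner_conj_symm _ _).symm
  refine ⟨⟨fun ⟨B, _, hB⟩ c => ?_, fun hdom => ?_⟩, fun hdom => ?_⟩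
  · have hT := isMatrixOperator_analysisOperator_comp_adjoint
      fun f => lp.memℓp_two_of_summable_sq (hB f).1
    exact ⟨_, fun k => (hT c k).tendsto_sum_nat⟩
  · obtain ⟨T, hT⟩ := exists_isMatrixOperator gram_hermitian hdom
    refine ⟨‖T‖ + 1, by positivity, fun f => ⟨(hT.summable_and_tsum_le f).1, ?_⟩⟩
    calc ∑' k, ‖⟪ψ k, f⟫‖ ^ 2 ≤ ‖T‖ * ‖f‖ ^ 2 := (hT.summable_and_tsum_le f).2
      _ ≤ (‖T‖ + 1) * ‖f‖ ^ 2 := by gcongr; linarith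
  · obtain ⟨T, hT⟩ := exists_isMatrixOperator gram_hermitian hdom
    refine ⟨‖T‖, fun c g hg => ?_⟩
    obtain rfl : g = T c := lp.ext <| funext fun k =>
      tendsto_nhds_unique (hg k) (hT c k).tendsto_sum_nat
    exact T.le_opNorm c
end
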